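/- There exists a twice continuously differentiable function f₃ : ℝ → ℝ with f₃(0) = 0 and f₃(1) = 0 such that for all v ∈ [0,1], −f₃''(v) − π² * f₃(v) = −2*π * ( f₂(v) − 2 * (∫_0^1 f(w)*f₂(w) dw) * f(v) ). -/

import Mathlib

/-! The right-hand side is a polynomial times `sin (π v)`, and the span of `P(v) cos(ωv) + Q(v) sin(ωv)`
over polynomials `P, Q` is stable under `d/dv`, with `(P, Q) ↦ (P' + ωQ, Q' - ωP)`. Hence
`y'' + ω² y` acts on it as `(P, Q) ↦ (P'' + 2ωQ', Q'' - 2ωP')`, and `f₃` is found by matching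
coefficients with `ω = π`: a cubic `P` vanishing at `0` and `1` and a quadratic `Q`. The same
calculus with `ω = 2π`, after `sin² (πv) = (1 - cos (2πv)) / 2`, gives an antiderivative of `f f₂`
and so the value `∫₀¹ f f₂ = -1/12 - 1/(16π²)`. -/

open Real MeasureTheory

/-- The limiting eigenfunction `f(v) = sin(πv)`. -/
noncomputable def f (v : ℝ) : ℝ := Real.sin (π * v)

/-- The second-order correction term
`f₂(v) = (−v²/2 + v − (1/2 + 3/(8π²)))·sin(πv)`. -/
noncomputable def f₂ (v : ℝ) : ℝ :=
  (-v ^ 2 / 2 + v - (1 / 2 + 3 / (8 * π ^ 2))) * Real.sin (π * v)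

open Polynomial

noncomputable def trigComb (ω : ℝ) (p q : ℝ[X]) (v : ℝ) : ℝ :=
  p.eval v * cos (ω * v) + q.eval v * sin (ω * v)

section trigComb

variable (ω : ℝ) (p q : ℝ[X])

theorem hasDerivAt_trigComb (v : ℝ) :
    HasDerivAt (trigComb ω p q)
      (trigComb ω (derivative p + C ω * q) (derivative q - C ω * p) v) v := by
  have hcos := (hasDerivAt_cos (ω * v)).comp v ((hasDerivAt_id v).const_mul ω)
  have hsin := (hasDerivAt_sin (ω * v)).comp v ((hasDerivAt_id v).const_mul ω)
  refine (((p.hasDerivAt v).mul hcos).add ((q.hasDerivAt v).mul hsin)).congr_deriv ?_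
  simp only [trigComb, eval_add, eval_sub, eval_mul, eval_C, Function.comp_apply]
  ring

theorem deriv_trigComb :
    deriv (trigComb ω p q) = trigComb ω (derivative p + C ω * q) (derivative q - C ω * p) :=
  funext fun v => (hasDerivAt_trigComb ω p q v).deriv

theorem deriv_deriv_trigComb_add (v : ℝ) :
    deriv (deriv (trigComb ω p q)) v + ω ^ 2 * trigComb ω p q v =
      trigComb ω (derivative (derivative p) + C (2 * ω) * derivative q)
        (derivative (derivative q) - C (2 * ω) * derivative p) v := by
  simp only [deriv_trigComb, trigComb, derivative_add, derivative_sub, derivative_C_mul, eval_add,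
    eval_sub, eval_mul, eval_C]
  ring

theorem contDiff_trigComb {n : WithTop ℕ∞} : ContDiff ℝ n (trigComb ω p q) := by
  have hp : ContDiff ℝ n fun v => p.eval v := by simpa using p.contDiff_aeval (𝕜 := ℝ) n
  have hq : ContDiff ℝ n fun v => q.eval v := by simpa using q.contDiff_aeval (𝕜 := ℝ) n
  exact (hp.mul (contDiff_cos.comp (contDiff_const.mul contDiff_id))).add
    (hq.mul (contDiff_sin.comp (contDiff_const.mul contDiff_id)))

end trigComb

theorem integral_f_mul_f₂ : ∫ w in (0:ℝ)..1, f w * f₂ w = -1 / 12 - 1 / (16 * π ^ 2) := by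
  have hπ := pi_ne_zero
  let c : ℝ := 1 / 2 + 3 / (8 * π ^ 2)
  let r : ℝ[X] := C (-1 / 2) * X ^ 2 + X - C c
  -- `f f₂ = r/2 - (r/2) cos (2πv)`; `R' = r/2`, and `a' + 2πb = r/2`, `b' = 2πa`
  let R : ℝ[X] := C (-1 / 12) * X ^ 3 + C (1 / 4) * X ^ 2 - C (c / 2) * X
  let a : ℝ[X] := C (1 / (8 * π ^ 2)) * (1 - X)
  let b : ℝ[X] := C (1 / (4 * π)) * r + C (1 / (16 * π ^ 3))
  have hderiv (v : ℝ) :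
      HasDerivAt (fun v => R.eval v - trigComb (2 * π) a b v) (f v * f₂ v) v := by
    refine ((R.hasDerivAt v).sub (hasDerivAt_trigComb _ a b v)).congr_deriv ?_
    have hff₂ : f v * f₂ v = (-v ^ 2 / 2 + v - c) * (1 / 2 - cos (2 * π * v) / 2) := by
      have hcos := cos_sq (π * v)
      rw [← mul_assoc] at hcos
      simp only [f, f₂, c]
      linear_combination (-v ^ 2 / 2 + v - c) * (sin_sq_add_cos_sq (π * v) - hcos)
    simp only [one_div, derivative_sub, derivative_mul, derivative_C, zero_mul,
      derivative_X_pow_succ, Nat.cast_ofNat, map_add, map_one, zero_add, Nat.cast_one, pow_one,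
      derivative_X, mul_one, eval_sub, eval_add, eval_mul, eval_C, eval_one, eval_pow, eval_X,
      trigComb, mul_inv_rev, map_mul, mul_zero, add_zero, derivative_one, zero_sub, mul_neg,
      eval_neg, sub_zero, hff₂, R, a, b, r]
    field_simp
    ring
  have hint : IntervalIntegrable (fun w => f w * f₂ w) volume 0 1 := by
    apply Continuous.intervalIntegrable
    unfold f f₂
    fun_prop
  rw [intervalIntegral.integral_eq_sub_of_hasDerivAt (fun v _ => hderiv v) hint]
  simp only [one_div, eval_sub, eval_add, eval_mul, eval_C, eval_pow, eval_X, one_pow, mul_one,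
    trigComb, mul_inv_rev, map_mul, eval_one, sub_self, mul_zero, cos_two_pi, map_add, sin_two_pi,
    add_zero, sub_zero, ne_eq, OfNat.ofNat_ne_zero, not_false_eq_true, zero_pow, cos_zero, zero_sub,
    neg_add_rev, sin_zero, sub_neg_eq_add, R, c, a, b, r]
  field_simp
  ring

-- `P'' + 2πQ' = 0` and `Q'' - 2πP' = -π (v² - 2v + 2/3) - 1/(2π)`
noncomputable def f₃Sol : ℝ → ℝ :=
  trigComb π (C (1 / 6) * X * (X - 1) * (X - 2)) (C (1 / (4 * π)) * X * (2 - X))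

theorem f₃Sol_zero : f₃Sol 0 = 0 := by
  simp [f₃Sol, trigComb]

theorem f₃Sol_one : f₃Sol 1 = 0 := by
  simp [f₃Sol, trigComb]

theorem f₃Sol_equation (v : ℝ) :
    -deriv (deriv f₃Sol) v - π ^ 2 * f₃Sol v =
      -2 * π * (f₂ v - 2 * (-1 / 12 - 1 / (16 * π ^ 2)) * f v) := by
  have hπ := pi_ne_zero
  rw [neg_sub_left, add_comm, f₃Sol, deriv_deriv_trigComb_add]
  simp only [trigComb, one_div, derivative_mul, derivative_C, zero_mul, derivative_X, mul_one,
    zero_add, derivative_sub, derivative_one, sub_zero, derivative_ofNat, derivative_add, map_mul,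
    mul_inv_rev, mul_zero, add_zero, zero_sub, mul_neg, eval_add, eval_mul, eval_C, eval_sub,
    eval_X, eval_ofNat, eval_one, eval_neg, derivative_neg, neg_add_rev, neg_mul, f₂, f]
  field_simp
  ring

/-- There exists a `C²` function `f₃` with `f₃(0) = f₃(1) = 0` solving
`−f₃'' − π² f₃ = −2π (f₂ − 2 (∫_0^1 f f₂) f)` on `[0,1]`. -/
theorem exists_f₃ :
    ∃ f₃ : ℝ → ℝ, ContDiff ℝ 2 f₃ ∧ f₃ 0 = 0 ∧ f₃ 1 = 0 ∧
      ∀ v ∈ Set.Icc (0:ℝ) 1,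
        -deriv (deriv f₃) v - π ^ 2 * f₃ v =
          -2 * π * (f₂ v - 2 * (∫ w in (0:ℝ)..1, f w * f₂ w) * f v) := by
  refine ⟨f₃Sol, contDiff_trigComb _ _ _, f₃Sol_zero, f₃Sol_one, fun v _ => ?_⟩
  rw [integral_f_mul_f₂]
  exact f₃Sol_equation v
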